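/- arXiv:2010.10441 — 5 statements merged into one kernel-verified Lean document; each statement's English description precedes it below -/
import Mathlib

section
/- For an irrational real number r > 1 and an integer n, n belongs to the set P_r = {⌊m·r⌋ : m ∈ ℤ, m ≠ 0} if and only if the fractional part of n/r is strictly greater than 1 - 1/r. -/
/-!
Because `m r` is irrational for `m ≠ 0`, `n = ⌊m r⌋` says exactly `n < m r < n + 1`, i.e.
`m - 1/r < n/r < m`. An integer `m` with `n/r` in the open interval `(m - 1/r, m)` exists iff
`{n/r} > 1 - 1/r` (take `m = ⌊n/r⌋ + 1`); and `m = 0` is impossible, as no integer lies in `(-1, 0)`.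
-/

def Pr (r : ℝ) : Set ℤ := {x | ∃ m : ℤ, m ≠ 0 ∧ x = ⌊(m : ℝ) * r⌋}

theorem Irrational.floor_eq_iff {x : ℝ} (hx : Irrational x) {n : ℤ} :
    ⌊x⌋ = n ↔ (n : ℝ) < x ∧ x < n + 1 := by
  rw [Int.floor_eq_iff]
  exact and_congr_left fun _ => ⟨fun h => h.lt_of_ne (hx.ne_int n).symm, le_of_lt⟩

theorem Int.one_sub_lt_fract_iff_exists {y δ : ℝ} (hδ : δ ≤ 1) :
    1 - δ < Int.fract y ↔ ∃ m : ℤ, (m : ℝ) - δ < y ∧ y < m := by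
  constructor
  · intro h
    refine ⟨⌊y⌋ + 1, ?_, ?_⟩
    · push_cast
      linarith [Int.self_sub_floor y]
    · exact_mod_cast Int.lt_floor_add_one y
  · rintro ⟨m, hlo, hhi⟩
    have hfloor : ⌊y⌋ = m - 1 := by
      rw [Int.floor_eq_iff]
      push_cast
      constructor <;> linarith
    rw [← Int.self_sub_floor, hfloor]
    push_cast
    linarith

theorem mem_Pr_iff_fract (r : ℝ) (hr : Irrational r) (hr1 : 1 < r) (n : ℤ) :
    n ∈ Pr r ↔ Int.fract ((n : ℝ) / r) > 1 - 1 / r := by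
  have hr0 : 0 < r := one_pos.trans hr1
  calc n ∈ Pr r ↔ ∃ m : ℤ, m ≠ 0 ∧ (n : ℝ) < m * r ∧ m * r < n + 1 := by
        refine exists_congr fun m => and_congr_right fun hm => ?_
        rw [eq_comm, (hr.intCast_mul hm).floor_eq_iff]
    _ ↔ ∃ m : ℤ, (n : ℝ) < m * r ∧ m * r < n + 1 := by
        refine exists_congr fun m => and_iff_right_of_imp fun ⟨hlo, hhi⟩ hm => ?_
        rw [hm, Int.cast_zero, zero_mul] at hlo hhi
        have : n < 0 := by exact_mod_cast hlo
        have : 0 < n + 1 := by exact_mod_cast hhi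
        omega
    _ ↔ ∃ m : ℤ, (m : ℝ) - 1 / r < n / r ∧ (n : ℝ) / r < m := by
        refine exists_congr fun m => ?_
        rw [div_lt_iff₀ hr0, lt_div_iff₀ hr0, sub_mul, one_div_mul_cancel hr0.ne',
          sub_lt_iff_lt_add, and_comm]
    _ ↔ Int.fract ((n : ℝ) / r) > 1 - 1 / r :=
        (Int.one_sub_lt_fract_iff_exists (div_le_one_of_le₀ hr1.le hr0.le)).symm
end

section
/- Let (α_i, β_i) for i = 1,…,m be open orientation intervals on the unit circle with all endpoints α_1,…,α_m,β_1,…,β_m distinct. Then the intersection ⋂_{i=1}^m (α_i, β_i) is nonempty if and only if there exists an index i₀ such that α_{i₀} ∈ (α_i, β_i) for every i ≠ i₀. -/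
noncomputable def uexp (x : ℝ) : ℂ := Complex.exp (2 * Real.pi * Complex.I * x)

def Orient (α β γ : ℂ) : Prop :=
  ∃ x y z : ℝ, x < y ∧ y < z ∧ z - x < 1 ∧ α = uexp x ∧ β = uexp y ∧ γ = uexp z

def arc (α β : ℂ) : Set ℂ := {γ | Orient α γ β}

/-!
Lift a common point of the arcs to `c : ℝ`; then every arc lifts to an interval `(x i, z i)`
around `c` of length `< 1`, and the arc with the largest `x i` has its left endpoint in all the
others (strictly, since the `α i` are distinct). Conversely, the points just counter-clockwise
of `α i₀` lie in every arc: in the arcs `i ≠ i₀` because arcs are open, and in the arc `i₀`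
because it starts at `α i₀`.
-/

open Filter Set Topology

lemma uexp_add_intCast (x : ℝ) (n : ℤ) : uexp (x + n) = uexp x := by
  rw [uexp, uexp, show 2 * Real.pi * Complex.I * ((x + n : ℝ) : ℂ) =
      2 * Real.pi * Complex.I * x + n * (2 * Real.pi * Complex.I) by push_cast; ring,
    Complex.exp_add, Complex.exp_int_mul_two_pi_mul_I, mul_one]

lemma uexp_sub_intCast (x : ℝ) (n : ℤ) : uexp (x - n) = uexp x := by
  rw [← uexp_add_intCast (x - n) n, sub_add_cancel]

lemma uexp_eq_uexp_iff {x y : ℝ} : uexp x = uexp y ↔ ∃ n : ℤ, x = y + n := by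
  refine ⟨fun h => ?_, fun ⟨n, hn⟩ => hn ▸ uexp_add_intCast y n⟩
  obtain ⟨n, hn⟩ := Complex.exp_eq_exp_iff_exists_int.1 h
  have h2πI : 2 * Real.pi * Complex.I ≠ 0 := by simp [Real.pi_ne_zero]
  have hxy : 2 * Real.pi * Complex.I * x = 2 * Real.pi * Complex.I * (y + n) := hn.trans (by ring)
  exact ⟨n, by exact_mod_cast mul_left_cancel₀ h2πI hxy⟩

lemma exists_uexp_eq {z : ℂ} (hz : ‖z‖ = 1) : ∃ x, uexp x = z := by
  refine ⟨z.arg / (2 * Real.pi), ?_⟩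
  have h := Complex.norm_mul_exp_arg_mul_I z
  rw [hz, Complex.ofReal_one, one_mul] at h
  rw [uexp]
  convert h using 2
  push_cast
  field_simp

lemma exists_uexp_eq_mem_Ico {z : ℂ} (hz : ‖z‖ = 1) (a : ℝ) :
    ∃ x ∈ Ico a (a + 1), uexp x = z := by
  obtain ⟨x, rfl⟩ := exists_uexp_eq hz
  refine ⟨x - ⌊x - a⌋, ⟨?_, ?_⟩, uexp_sub_intCast x _⟩
  · linarith [Int.floor_le (x - a)]
  · linarith [Int.lt_floor_add_one (x - a)]

lemma uexp_mem_arc_iff {α β : ℂ} {c : ℝ} :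
    uexp c ∈ arc α β ↔
      ∃ x z, x < c ∧ c < z ∧ z - x < 1 ∧ α = uexp x ∧ β = uexp z := by
  refine ⟨?_, fun ⟨x, z, hxc, hcz, hzx, hα, hβ⟩ =>
    ⟨x, c, z, hxc, hcz, hzx, hα, rfl, hβ⟩⟩
  rintro ⟨x, y, z, hxy, hyz, hzx, rfl, hy, rfl⟩
  obtain ⟨n, rfl⟩ := uexp_eq_uexp_iff.1 hy.symm
  exact ⟨x - n, z - n, by linarith, by linarith, by linarith,
    (uexp_sub_intCast x n).symm, (uexp_sub_intCast z n).symm⟩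

lemma eventually_uexp_mem_arc {α β : ℂ} {a : ℝ} (h : uexp a ∈ arc α β) :
    ∀ᶠ c in 𝓝 a, uexp c ∈ arc α β := by
  obtain ⟨x, z, hxa, haz, hzx, hα, hβ⟩ := uexp_mem_arc_iff.1 h
  filter_upwards [Ioo_mem_nhds hxa haz] with c hc
  exact uexp_mem_arc_iff.2 ⟨x, z, hc.1, hc.2, hzx, hα, hβ⟩

lemma eventually_uexp_mem_arc_uexp {β : ℂ} (hβ : ‖β‖ = 1) {a : ℝ} (hne : uexp a ≠ β) :
    ∀ᶠ c in 𝓝[>] a, uexp c ∈ arc (uexp a) β := by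
  obtain ⟨z, ⟨hlez, hza⟩, rfl⟩ := exists_uexp_eq_mem_Ico hβ a
  have haz : a < z := hlez.lt_of_ne (by rintro rfl; exact hne rfl)
  filter_upwards [Ioo_mem_nhdsGT haz] with c hc
  exact ⟨a, c, z, hc.1, hc.2, by linarith, rfl, rfl, rfl⟩

lemma exists_left_endpoint_mem_arcs {ι : Type*} [Finite ι] [Nonempty ι]
    {α β : ι → ℂ} (hα : Function.Injective α) (h : (⋂ i, arc (α i) (β i)).Nonempty) :
    ∃ i₀, ∀ i, i ≠ i₀ → α i₀ ∈ arc (α i) (β i) := by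
  obtain ⟨γ, hγ⟩ := h
  rw [mem_iInter] at hγ
  obtain ⟨-, c, -, -, -, -, -, rfl, -⟩ := hγ (Classical.arbitrary ι)
  choose x z hxc hcz hzx hαx hβz using fun i => uexp_mem_arc_iff.1 (hγ i)
  obtain ⟨i₀, hi₀⟩ := Finite.exists_max x
  refine ⟨i₀, fun i hi => ⟨x i, x i₀, z i, ?_, by linarith [hxc i₀, hcz i], hzx i,
    hαx i, hαx i₀, hβz i⟩⟩
  refine (hi₀ i).lt_of_ne fun hx => hi (hα ?_)
  rw [hαx, hαx, hx]

lemma iInter_arc_nonempty_of_mem_arcs {ι : Type*} [Finite ι] {α β : ι → ℂ} {i₀ : ι}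
    (hα : ‖α i₀‖ = 1) (hβ : ‖β i₀‖ = 1) (hne : α i₀ ≠ β i₀)
    (h : ∀ i, i ≠ i₀ → α i₀ ∈ arc (α i) (β i)) :
    (⋂ i, arc (α i) (β i)).Nonempty := by
  obtain ⟨a, ha⟩ := exists_uexp_eq hα
  have hnear : ∀ i, ∀ᶠ c in 𝓝[>] a, uexp c ∈ arc (α i) (β i) := by
    intro i
    by_cases hi : i = i₀
    · subst hi
      rw [← ha] at hne ⊢
      exact eventually_uexp_mem_arc_uexp hβ hne
    · rw [← ha] at h
      exact (eventually_uexp_mem_arc (h i hi)).filter_mono nhdsWithin_le_nhds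
  obtain ⟨c, hc⟩ := (eventually_all.2 hnear).exists
  exact ⟨uexp c, mem_iInter.2 hc⟩

theorem intersection_of_arcs_general (m : ℕ) (hm : 0 < m) (α β : Fin m → ℂ)
    (hα : ∀ i, ‖α i‖ = 1) (hβ : ∀ i, ‖β i‖ = 1)
    (hdist : ∀ i j, α i = α j → i = j)
    (hdist'' : ∀ i j, α i ≠ β j) :
    (⋂ i, arc (α i) (β i)).Nonempty ↔
      ∃ i₀, ∀ i, i ≠ i₀ → α i₀ ∈ arc (α i) (β i) := by
  have : Nonempty (Fin m) := ⟨⟨0, hm⟩⟩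
  exact ⟨exists_left_endpoint_mem_arcs (fun i j => hdist i j), fun ⟨i₀, h⟩ =>
    iInter_arc_nonempty_of_mem_arcs (hα i₀) (hβ i₀) (hdist'' i₀ i₀) h⟩

theorem intersection_of_arcs (m : ℕ) (hm : 0 < m) (α β : Fin m → ℂ)
    (hα : ∀ i, ‖α i‖ = 1) (hβ : ∀ i, ‖β i‖ = 1)
    (hdist : ∀ i j, α i = α j → i = j) (hdist' : ∀ i j, β i = β j → i = j)
    (hdist'' : ∀ i j, α i ≠ β j) :
    (⋂ i, arc (α i) (β i)).Nonempty ↔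
      ∃ i₀, ∀ i, i ≠ i₀ → α i₀ ∈ arc (α i) (β i) :=
  intersection_of_arcs_general m hm α β hα hβ hdist hdist''
end

section
/- Let r > 1 be irrational. For every positive integer n there exists a positive integer m such that m, 2m, …, n·m all belong to P_r while −m, −2m, …, −n·m all do not belong to P_r. -/
lemma ceil_mul_sub_mul_le {i : ℤ} (hi : 0 ≤ i) (y : ℝ) :
    (⌈i * y⌉ : ℝ) - i * y ≤ i * (⌈y⌉ - y) := by
  have hceil : ⌈(i : ℝ) * y⌉ ≤ i * ⌈y⌉ := by
    rw [Int.ceil_le]; push_cast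
    exact mul_le_mul_of_nonneg_left (Int.le_ceil y) (by exact_mod_cast hi)
  have : (⌈(i : ℝ) * y⌉ : ℝ) ≤ i * ⌈y⌉ := by exact_mod_cast hceil
  linarith

lemma exists_pos_ceil_mul_sub_le {y : ℝ} {l : ℤ} (hl : (l : ℝ) < y) (hy : y ≤ l + 1) :
    ∃ j : ℤ, 0 < j ∧ (⌈j * y⌉ : ℝ) - j * y ≤ y - l := by
  set δ := y - l
  have hδ0 : 0 < δ := by linarith
  refine ⟨⌊δ⁻¹⌋, Int.floor_pos.2 (one_le_inv₀ hδ0 |>.2 (by linarith)), ?_⟩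
  have hj_le : (⌊δ⁻¹⌋ : ℝ) * δ ≤ 1 := by
    calc (⌊δ⁻¹⌋ : ℝ) * δ ≤ δ⁻¹ * δ := by gcongr; exact Int.floor_le _
      _ = 1 := inv_mul_cancel₀ hδ0.ne'
  have hj_gt : 1 - δ < (⌊δ⁻¹⌋ : ℝ) * δ := by
    calc 1 - δ = (δ⁻¹ - 1) * δ := by field_simp
      _ < ⌊δ⁻¹⌋ * δ := by gcongr; exact Int.sub_one_lt_floor _
  have hceil : ⌈(⌊δ⁻¹⌋ : ℝ) * y⌉ ≤ ⌊δ⁻¹⌋ * l + 1 := by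
    rw [Int.ceil_le]; push_cast
    nlinarith
  have : (⌈(⌊δ⁻¹⌋ : ℝ) * y⌉ : ℝ) ≤ ⌊δ⁻¹⌋ * l + 1 := by exact_mod_cast hceil
  nlinarith

lemma Irrational.exists_pos_ceil_mul_sub_lt {θ : ℝ} (hθ : Irrational θ) {ε : ℝ} (hε : 0 < ε) :
    ∃ m : ℤ, 0 < m ∧ (⌈m * θ⌉ : ℝ) - m * θ < ε := by
  obtain ⟨N, hN⟩ := exists_nat_one_div_lt hε
  obtain ⟨l, k, hk, -, hkl⟩ := Real.exists_int_int_abs_mul_sub_le θ N.succ_pos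
  have hkl' : |k * θ - l| < ε := by
    refine hkl.trans_lt (lt_of_le_of_lt ?_ hN)
    gcongr
    linarith
  have hkl1 : |k * θ - l| ≤ 1 := hkl.trans (div_le_one_of_le₀ (by linarith) (by positivity))
  rw [abs_sub_lt_iff] at hkl'
  rcases (hθ.intCast_mul hk.ne').ne_int l |>.lt_or_gt with hlt | hgt
  · refine ⟨k, hk, ?_⟩
    have : ⌈(k : ℝ) * θ⌉ ≤ l := Int.ceil_le.2 hlt.le
    have : (⌈(k : ℝ) * θ⌉ : ℝ) ≤ l := by exact_mod_cast this
    linarith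
  · obtain ⟨j, hj, hgap⟩ :=
      exists_pos_ceil_mul_sub_le hgt (by linarith [le_abs_self ((k : ℝ) * θ - l)])
    refine ⟨j * k, mul_pos hj hk, ?_⟩
    push_cast
    rw [mul_assoc]
    linarith

lemma mem_Pr_of_ceil_sub_lt {r : ℝ} (hr : 0 < r) {x : ℤ} (hx : 0 < x)
    (h : (⌈x * r⁻¹⌉ : ℝ) - x * r⁻¹ < r⁻¹) : x ∈ Pr r := by
  have hxr : (x : ℝ) * r⁻¹ * r = x := by field_simp
  refine ⟨⌈x * r⁻¹⌉, (Int.ceil_pos.2 (by positivity)).ne', ?_⟩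
  rw [eq_comm, Int.floor_eq_iff]
  constructor
  · calc (x : ℝ) = x * r⁻¹ * r := hxr.symm
      _ ≤ ⌈x * r⁻¹⌉ * r := by gcongr; exact Int.le_ceil _
  · calc (⌈x * r⁻¹⌉ : ℝ) * r < (x * r⁻¹ + r⁻¹) * r := by gcongr; linarith
      _ = x + 1 := by field_simp

lemma neg_notMem_Pr_of_ceil_sub_le {r : ℝ} (hr : Irrational r) (hr0 : 0 < r) {x : ℤ}
    (hx : x ≠ 0) (h : (⌈x * r⁻¹⌉ : ℝ) - x * r⁻¹ ≤ 1 - r⁻¹) : -x ∉ Pr r := by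
  -- `-k` would be an integer in `((x - 1) / r, x / r)`, forcing a gap `> 1 - 1 / r`.
  rintro ⟨k, -, hk⟩
  obtain ⟨hlo, hhi⟩ := Int.floor_eq_iff.1 hk.symm
  push_cast at hlo hhi
  have hle : ((-k : ℤ) : ℝ) ≤ x * r⁻¹ := by
    rw [le_mul_inv_iff₀ hr0]; push_cast; linarith
  have hlt : -k < ⌈(x : ℝ) * r⁻¹⌉ :=
    Int.lt_ceil.2 (hle.lt_of_ne ((hr.inv.intCast_mul hx).ne_int (-k)).symm)
  have hlt' : ((-k : ℤ) : ℝ) ≤ ⌈(x : ℝ) * r⁻¹⌉ - 1 := by exact_mod_cast Int.le_sub_one_of_lt hlt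
  have hgt : ((x : ℝ) - 1) * r⁻¹ < ((-k : ℤ) : ℝ) := by
    rw [← div_eq_mul_inv, div_lt_iff₀ hr0]; push_cast; linarith
  linarith

theorem multiples_in_Pr (r : ℝ) (hr : Irrational r) (hr1 : 1 < r) (n : ℕ) (hn : 0 < n) :
    ∃ m : ℤ, 0 < m ∧ ∀ i : ℤ, 1 ≤ i → i ≤ n → i * m ∈ Pr r ∧ -(i * m) ∉ Pr r := by
  have hr0 : 0 < r := one_pos.trans hr1
  set c := min r⁻¹ (1 - r⁻¹)
  have hc : 0 < c := lt_min (inv_pos.2 hr0) (sub_pos.2 (inv_lt_one_of_one_lt₀ hr1))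
  obtain ⟨m, hm, hgap⟩ := hr.inv.exists_pos_ceil_mul_sub_lt (div_pos hc (Nat.cast_pos.2 hn))
  refine ⟨m, hm, fun i hi1 hin => ?_⟩
  have hgap_im : (⌈((i * m : ℤ) : ℝ) * r⁻¹⌉ : ℝ) - (i * m : ℤ) * r⁻¹ < c := by
    push_cast
    rw [mul_assoc]
    calc _ ≤ i * (⌈m * r⁻¹⌉ - m * r⁻¹) := ceil_mul_sub_mul_le (by omega) _
      _ ≤ n * (⌈m * r⁻¹⌉ - m * r⁻¹) := by
        gcongr
        · linarith [Int.le_ceil ((m : ℝ) * r⁻¹)]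
        · exact_mod_cast hin
      _ < c := by rwa [lt_div_iff₀' (Nat.cast_pos.2 hn)] at hgap
  have him : 0 < i * m := mul_pos (by omega) hm
  exact ⟨mem_Pr_of_ceil_sub_lt hr0 him (hgap_im.trans_le (min_le_left _ _)),
    neg_notMem_Pr_of_ceil_sub_le hr hr0 him.ne' (hgap_im.le.trans (min_le_right _ _))⟩
end

section
/- Let r > 1 be irrational. The formula φ(x, y) := (y − x ∈ P_r) has the order property over ℤ: for every n > 0 there exist integers a_1, …, a_n such that a_j − a_i ∈ P_r if and only if i < j. -/
open Int

theorem Int.floor_intCast_mul_of_mul_fract_lt_one {R : Type*} [Ring R] [LinearOrder R]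
    [IsStrictOrderedRing R] [FloorRing R] {k : ℤ} {x : R} (hk : 0 ≤ k) (h : k * fract x < 1) :
    ⌊(k : R) * x⌋ = k * ⌊x⌋ := by
  have hsplit : (k : R) * x = ((k * ⌊x⌋ : ℤ) : R) + k * fract x := by
    rw [fract, mul_sub]; push_cast; rw [add_sub_cancel]
  have hsmall : ⌊(k : R) * fract x⌋ = 0 :=
    floor_eq_zero_iff.2 ⟨mul_nonneg (by exact_mod_cast hk) (fract_nonneg x), h⟩
  rw [hsplit, floor_intCast_add, hsmall, add_zero]

theorem Int.fract_intCast_mul_of_mul_fract_lt_one {R : Type*} [Ring R] [LinearOrder R]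
    [IsStrictOrderedRing R] [FloorRing R] {k : ℤ} {x : R} (hk : 0 ≤ k) (h : k * fract x < 1) :
    fract ((k : R) * x) = k * fract x := by
  rw [fract, fract, floor_intCast_mul_of_mul_fract_lt_one hk h, mul_sub]
  push_cast
  rfl

theorem Irrational.exists_fract_intCast_mul_mem_Ioo {r δ : ℝ} (hr : Irrational r) (hδ : 0 < δ) :
    ∃ N : ℤ, fract ((N : ℝ) * r) ∈ Set.Ioo 0 δ := by
  have hdense : Dense (AddSubgroup.closure {r, 1} : Set ℝ) :=
    dense_addSubgroupClosure_pair_iff.2 (by simpa using hr)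
  obtain ⟨x, hx, hx0, hxδ⟩ := hdense.exists_between (lt_min hδ one_pos)
  obtain ⟨N, M, rfl⟩ := AddSubgroup.mem_closure_pair.1 hx
  refine ⟨N, ?_⟩
  have hfract : fract ((N : ℝ) * r) = N • r + M • (1 : ℝ) := by
    rw [fract_eq_iff]
    refine ⟨hx0.le, hxδ.trans_le (min_le_right _ _), -M, ?_⟩
    simp only [zsmul_eq_mul]
    push_cast
    ring
  rw [hfract]
  exact ⟨hx0, hxδ.trans_le (min_le_left _ _)⟩

section Pr

variable {r : ℝ}

theorem zero_notMem_Pr (hr : 1 ≤ r) : (0 : ℤ) ∉ Pr r := by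
  rintro ⟨m, hm, hfloor⟩
  rcases hm.lt_or_gt with hneg | hpos
  · have hm' : (m : ℝ) ≤ -1 := by exact_mod_cast (show m ≤ -1 by omega)
    have : ⌊(m : ℝ) * r⌋ < 0 := floor_lt.2 (by push_cast; nlinarith)
    omega
  · have hm' : (1 : ℝ) ≤ m := by exact_mod_cast hpos
    have : 1 ≤ ⌊(m : ℝ) * r⌋ := le_floor.2 (by push_cast; nlinarith)
    omega

theorem neg_floor_notMem_Pr (hr : 1 ≤ r) {M : ℤ} (hpos : 0 < fract ((M : ℝ) * r))
    (hlt : fract ((M : ℝ) * r) < fract r) : -⌊(M : ℝ) * r⌋ ∉ Pr r := by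
  rintro ⟨m, -, hm⟩
  have hm_le := floor_le ((m : ℝ) * r)
  have hm_lt := lt_floor_add_one ((m : ℝ) * r)
  have hM : (M : ℝ) * r = ⌊(M : ℝ) * r⌋ + fract ((M : ℝ) * r) := (floor_add_fract _).symm
  rw [← hm] at hm_le hm_lt
  push_cast at hm_le hm_lt
  have hsum_pos : 0 < ((m + M : ℤ) : ℝ) * r := by push_cast; linarith
  have hsum_lt : ((m + M : ℤ) : ℝ) * r < 1 + fract r := by push_cast; linarith
  have hsum : (1 : ℝ) ≤ ((m + M : ℤ) : ℝ) := by
    exact_mod_cast (pos_of_mul_pos_left hsum_pos (by linarith) : (0 : ℝ) < (m + M : ℤ))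
  have hr_le : r ≤ ((m + M : ℤ) : ℝ) * r := le_mul_of_one_le_left (by linarith) hsum
  have hr_floor : (1 : ℝ) ≤ ⌊r⌋ := by exact_mod_cast le_floor.2 (by simpa using hr)
  linarith [floor_add_fract r]

theorem intCast_mul_floor_mem_Pr_iff (hr : 1 ≤ r) {N : ℤ} (hpos : 0 < fract ((N : ℝ) * r))
    {k : ℤ} (hk : |(k : ℝ)| * fract ((N : ℝ) * r) < fract r) :
    k * ⌊(N : ℝ) * r⌋ ∈ Pr r ↔ 0 < k := by
  have hN : N ≠ 0 := by rintro rfl; simp at hpos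
  rcases lt_trichotomy k 0 with hneg | rfl | hkpos
  · obtain ⟨l, rfl⟩ : ∃ l : ℤ, k = -l := ⟨-k, (neg_neg k).symm⟩
    have hl : 0 < l := by omega
    have hlr : (l : ℝ) * fract ((N : ℝ) * r) < fract r := by
      simpa [abs_of_pos (by exact_mod_cast hl : (0 : ℝ) < l)] using hk
    have hl1 := hlr.trans (fract_lt_one r)
    have hfract := fract_intCast_mul_of_mul_fract_lt_one hl.le hl1
    have hfloor := floor_intCast_mul_of_mul_fract_lt_one hl.le hl1
    rw [← mul_assoc, ← Int.cast_mul] at hfract hfloor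
    have hnotMem := neg_floor_notMem_Pr hr (M := l * N)
      (by rw [hfract]; exact mul_pos (by exact_mod_cast hl) hpos) (by rwa [hfract])
    rw [hfloor, ← neg_mul] at hnotMem
    exact iff_of_false hnotMem (by omega)
  · simp [zero_notMem_Pr hr]
  · have hk1 : (k : ℝ) * fract ((N : ℝ) * r) < 1 := by
      simpa [abs_of_pos (by exact_mod_cast hkpos : (0 : ℝ) < k)] using hk.trans (fract_lt_one r)
    have hfloor := floor_intCast_mul_of_mul_fract_lt_one hkpos.le hk1
    rw [← mul_assoc, ← Int.cast_mul] at hfloor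
    exact iff_of_true ⟨k * N, mul_ne_zero hkpos.ne' hN, hfloor.symm⟩ hkpos

end Pr

theorem Pr_order_property_general (r : ℝ) (hr : Irrational r) (hr1 : 1 < r) (n : ℕ) :
    ∃ a : Fin n → ℤ, ∀ i j : Fin n, (a j - a i ∈ Pr r ↔ i < j) := by
  have hfr : 0 < fract r := fract_pos.2 (hr.ne_int ⌊r⌋)
  obtain ⟨N, hpos, hsmall⟩ :=
    hr.exists_fract_intCast_mul_mem_Ioo (δ := fract r / (n + 1)) (by positivity)
  refine ⟨fun i => (i : ℤ) * ⌊(N : ℝ) * r⌋, fun i j => ?_⟩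
  have hdist : |(((j : ℤ) - i : ℤ) : ℝ)| ≤ n := by
    have : |(j : ℤ) - i| ≤ n := abs_sub_le_iff.2 ⟨by omega, by omega⟩
    rw [← Int.cast_abs]; exact_mod_cast this
  have hk : |(((j : ℤ) - i : ℤ) : ℝ)| * fract ((N : ℝ) * r) < fract r :=
    calc |(((j : ℤ) - i : ℤ) : ℝ)| * fract ((N : ℝ) * r)
        ≤ (n + 1) * fract ((N : ℝ) * r) := mul_le_mul_of_nonneg_right (by linarith) hpos.le
      _ < fract r := by rwa [lt_div_iff₀ (by positivity), mul_comm] at hsmall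
  rw [← sub_mul, intCast_mul_floor_mem_Pr_iff hr1.le hpos hk, sub_pos, Nat.cast_lt,
    Fin.val_fin_lt]

theorem Pr_order_property (r : ℝ) (hr : Irrational r) (hr1 : 1 < r) (n : ℕ) (hn : 0 < n) :
    ∃ a : Fin n → ℤ, ∀ i j : Fin n, (a j - a i ∈ Pr r ↔ i < j) :=
  Pr_order_property_general r hr hr1 n
end

section
/- Let Γ be a dense subgroup of the unit circle, and let C = (α, β) ∩ Γ be a nonempty proper convex subset (an arc intersected with Γ). Then the preimage of C under any group isomorphism h : ℤ → Γ (with h(n) = exp(2πi·n/r), r > 1 irrational) has the uniform gaps property: there exists M > 0 such that for every x ∈ h⁻¹(C), one of x+1, …, x+M lies in h⁻¹(C). -/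
noncomputable def hmap (r : ℝ) (n : ℤ) : ℂ := uexp ((n : ℝ) / r)

/-! By Dirichlet's approximation theorem there are `k ≥ 1` and `j` with `δ = k / r - j` shorter
than the arc, and `δ ≠ 0` since `r` is irrational. Adding `k` to `x` rotates `hmap r x` by `δ`,
so one of the first `⌊1 / |δ|⌋ + 1` such rotations lands in the arc, whatever `x` is. -/

open Set

lemma uexp_add_intCast_s18 (u : ℝ) (m : ℤ) : uexp (u + m) = uexp u := by
  rw [uexp, uexp, Complex.ofReal_add, mul_add, Complex.exp_add, Complex.ofReal_intCast,
    mul_comm _ (m : ℂ), Complex.exp_int_mul_two_pi_mul_I, mul_one]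

lemma uexp_mem_arc_of_mem_Ioo {a b t : ℝ} (hba : b < a + 1) {m : ℤ}
    (ht : t ∈ Ioo (a + m) (b + m)) : uexp t ∈ arc (uexp a) (uexp b) :=
  ⟨a + m, t, b + m, ht.1, ht.2, by linarith, (uexp_add_intCast_s18 a m).symm, rfl,
    (uexp_add_intCast_s18 b m).symm⟩

lemma exists_add_mul_mem_Ioo_add_intCast_of_pos {a b δ : ℝ} (hδ : 0 < δ) (hδab : δ < b - a)
    (t : ℝ) : ∃ i : ℤ, 1 ≤ i ∧ i ≤ ⌊1 / δ⌋ + 1 ∧ ∃ m : ℤ, t + i * δ ∈ Ioo (a + m) (b + m) := by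
  set m : ℤ := ⌊t - a⌋ + 1
  set u := a + m - t
  have hu : u ∈ Ioc 0 1 := by
    have := Int.floor_le (t - a)
    have := Int.lt_floor_add_one (t - a)
    constructor <;> push_cast [u, m] <;> linarith
  -- `i` is the first step with `t + i * δ > a + m`; since `δ < b - a` it cannot overshoot `b + m`.
  refine ⟨⌊u / δ⌋ + 1, ?_, ?_, m, ?_, ?_⟩
  · have := Int.floor_nonneg.2 (div_pos hu.1 hδ).le
    omega
  · have := Int.floor_le_floor (div_le_div_of_nonneg_right hu.2 hδ.le)
    omega
  · have := (div_lt_iff₀ hδ).1 (Int.lt_floor_add_one (u / δ))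
    push_cast
    linarith
  · have := (le_div_iff₀ hδ).1 (Int.floor_le (u / δ))
    push_cast
    linarith

lemma exists_add_mul_mem_Ioo_add_intCast {a b δ : ℝ} (hδ : δ ≠ 0) (hδab : |δ| < b - a)
    (t : ℝ) : ∃ i : ℤ, 1 ≤ i ∧ i ≤ ⌊1 / |δ|⌋ + 1 ∧ ∃ m : ℤ, t + i * δ ∈ Ioo (a + m) (b + m) := by
  rcases hδ.lt_or_gt with hneg | hpos
  · rw [abs_of_neg hneg] at hδab ⊢
    obtain ⟨i, hi1, hiN, m, hm⟩ := exists_add_mul_mem_Ioo_add_intCast_of_pos (a := -b) (b := -a)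
      (neg_pos.2 hneg) (by linarith) (-t)
    refine ⟨i, hi1, hiN, -m, ?_, ?_⟩ <;> push_cast <;> linarith [hm.1, hm.2]
  · rw [abs_of_pos hpos] at hδab ⊢
    exact exists_add_mul_mem_Ioo_add_intCast_of_pos hpos hδab t

lemma Irrational.exists_intCast_div_sub_intCast_ne_zero_abs_lt {r ε : ℝ} (hr : Irrational r)
    (hε : 0 < ε) : ∃ k j : ℤ, 0 < k ∧ k / r - j ≠ 0 ∧ |k / r - j| < ε := by
  obtain ⟨n, hn⟩ := exists_nat_one_div_lt hε
  obtain ⟨j, k, hk, -, hkj⟩ := Real.exists_int_int_abs_mul_sub_le r⁻¹ n.succ_pos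
  refine ⟨k, j, hk, ((hr.intCast_div hk.ne').sub_intCast j).ne_zero, ?_⟩
  calc |k / r - j| = |k * r⁻¹ - j| := by rw [div_eq_mul_inv]
    _ ≤ 1 / (n.succ + 1) := hkj
    _ ≤ 1 / (n + 1) := by gcongr; simp
    _ < ε := hn

theorem preimage_convex_uniformGaps_general (r : ℝ) (hr : Irrational r) (α β : ℂ) :
    ∃ M : ℤ, 0 < M ∧ ∀ x : ℤ, hmap r x ∈ arc α β →
      ∃ i : ℤ, 1 ≤ i ∧ i ≤ M ∧ hmap r (x + i) ∈ arc α β := by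
  rcases (arc α β).eq_empty_or_nonempty with hempty | ⟨_, a, _, b, hay, hyb, hba, rfl, -, rfl⟩
  · exact ⟨1, one_pos, fun x hx => by simp [hempty] at hx⟩
  have hab : a < b := hay.trans hyb
  obtain ⟨k, j, hk, hδ, hδab⟩ :=
    hr.exists_intCast_div_sub_intCast_ne_zero_abs_lt (sub_pos.2 hab)
  refine ⟨(⌊1 / |k / r - j|⌋ + 1) * k, by positivity, fun x _ => ?_⟩
  obtain ⟨i, hi1, hiN, m, hm⟩ := exists_add_mul_mem_Ioo_add_intCast hδ hδab (x / r)
  refine ⟨i * k, by nlinarith, by gcongr, ?_⟩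
  have hstep : ((x + i * k : ℤ) : ℝ) / r = (x / r + i * (k / r - j)) + (i * j : ℤ) := by
    push_cast; ring
  rw [hmap, hstep, uexp_add_intCast_s18]
  exact uexp_mem_arc_of_mem_Ioo (by linarith) hm

theorem preimage_convex_uniformGaps (r : ℝ) (hr : Irrational r) (hr1 : 1 < r)
    (α β : ℂ) (hα : ‖α‖ = 1) (hβ : ‖β‖ = 1) (hne : α ≠ β) :
    ∃ M : ℤ, 0 < M ∧ ∀ x : ℤ, hmap r x ∈ arc α β →
      ∃ i : ℤ, 1 ≤ i ∧ i ≤ M ∧ hmap r (x + i) ∈ arc α β :=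
  preimage_convex_uniformGaps_general r hr α β
end
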